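/- arXiv:2405.09950 — 2 statements merged into one kernel-verified Lean document; each statement's English description precedes it below -/
import Mathlib

section
/- Let f : [0,∞) → [0,∞) be C², concave, with f(0)=0, f'(0)=1, satisfying f''(r) − (1/4) r κ(r) f'(r) ≤ −(c/(2σ₀²)) f(r) for all r > 0, for some c > 0. Suppose G : ℝ^d → ℝ^d satisfies (x−y)·(G(x)−G(y)) ≤ −(σ₀²/2)κ(|x−y|)|x−y|² for all x,y. Then for all x ≠ y ∈ ℝ^d and π ∈ [0,1], writing λ² = 1 − π², f'(|x−y|)·( (x−y)/|x−y| )·(G(x)−G(y)) + 2σ₀² f''(|x−y|) π² ≤ −c f(|x−y|) π² − (σ₀²/2) f'(|x−y|)|x−y| κ(|x−y|) λ². -/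
open scoped InnerProductSpace

theorem stmt_10 {d : ℕ} (f : ℝ → ℝ) (κ : ℝ → ℝ) (c σ₀ : ℝ)
    (hc : 0 < c) (hσ₀ : 0 < σ₀)
    (hf0 : f 0 = 0) (hf'0 : deriv f 0 = 1)
    (hf' : ∀ r : ℝ, 0 ≤ r → 0 ≤ deriv f r)
    (hf'' : ∀ r : ℝ, 0 < r → deriv (deriv f) r ≤ 0)
    (hfineq : ∀ r : ℝ, 0 < r →
      deriv (deriv f) r - 1 / 4 * r * κ r * deriv f r ≤ -(c / (2 * σ₀ ^ 2)) * f r)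
    (G : EuclideanSpace ℝ (Fin d) → EuclideanSpace ℝ (Fin d))
    (hG : ∀ x y, ⟪x - y, G x - G y⟫_ℝ ≤ -(σ₀ ^ 2 / 2) * κ ‖x - y‖ * ‖x - y‖ ^ 2) :
    ∀ x y : EuclideanSpace ℝ (Fin d), x ≠ y → ∀ pr lam : ℝ,
      0 ≤ pr → pr ≤ 1 → 0 ≤ lam → lam ≤ 1 → pr ^ 2 + lam ^ 2 = 1 →
      deriv f ‖x - y‖ * (⟪x - y, G x - G y⟫_ℝ / ‖x - y‖) +
          2 * σ₀ ^ 2 * deriv (deriv f) ‖x - y‖ * pr ^ 2 ≤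
        -c * f ‖x - y‖ * pr ^ 2 -
          σ₀ ^ 2 / 2 * deriv f ‖x - y‖ * ‖x - y‖ * κ ‖x - y‖ * lam ^ 2 := by
  intro x y hxy pr lam hpr0 hpr1 hlam0 hlam1 hpl
  set r : ℝ := ‖x - y‖ with hrdef
  have hr : 0 < r := by
    simpa [hrdef] using norm_pos_iff.mpr (sub_ne_zero.mpr hxy)
  have hI := hG x y
  have hf'r : 0 ≤ deriv f r := hf' r hr.le
  have hf''r : deriv (deriv f) r ≤ 0 := hf'' r hr
  have hkey := hfineq r hr
  -- multiply hkey by 2σ₀²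
  have hkey2 : 2 * σ₀ ^ 2 * deriv (deriv f) r - σ₀ ^ 2 / 2 * r * κ r * deriv f r
      ≤ -c * f r := by
    have h2 : (0:ℝ) < 2 * σ₀ ^ 2 := by positivity
    have := mul_le_mul_of_nonneg_left hkey h2.le
    have hσ : σ₀ ^ 2 ≠ 0 := by positivity
    calc 2 * σ₀ ^ 2 * deriv (deriv f) r - σ₀ ^ 2 / 2 * r * κ r * deriv f r
        = 2 * σ₀ ^ 2 * (deriv (deriv f) r - 1 / 4 * r * κ r * deriv f r) := by ring
      _ ≤ 2 * σ₀ ^ 2 * (-(c / (2 * σ₀ ^ 2)) * f r) := this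
      _ = -c * f r := by field_simp
  -- bound the inner product term
  have hIr : deriv f r * (⟪x - y, G x - G y⟫_ℝ / r)
      ≤ -(σ₀ ^ 2 / 2) * κ r * r * deriv f r := by
    have h1 : deriv f r * ⟪x - y, G x - G y⟫_ℝ
        ≤ deriv f r * (-(σ₀ ^ 2 / 2) * κ r * r ^ 2) :=
      mul_le_mul_of_nonneg_left hI hf'r
    have h2 := div_le_div_of_nonneg_right h1 hr.le
    calc deriv f r * (⟪x - y, G x - G y⟫_ℝ / r)
        = deriv f r * ⟪x - y, G x - G y⟫_ℝ / r := by ring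
      _ ≤ deriv f r * (-(σ₀ ^ 2 / 2) * κ r * r ^ 2) / r := h2
      _ = -(σ₀ ^ 2 / 2) * κ r * r * deriv f r := by
          field_simp
  have hprod := mul_le_mul_of_nonneg_left hkey2 (sq_nonneg pr)
  have hl : lam ^ 2 = 1 - pr ^ 2 := by linarith
  rw [hl]
  nlinarith [hprod, hIr]
end

section
/- Let (u, w) be a pair of nonnegative continuous functions on [0,∞) satisfying, for constants c > 0, a > c, C ≥ 0, ε(t) := η e^{-γ t} + β with η, β ≥ 0, γ > 0: u(t) ≤ u(0)e^{-ct} + h/c + C∫₀^t e^{-c(t−s)} ε(s)(u(s) + w(s)) ds and w(t) ≤ w(0)e^{-at} + C∫₀^t e^{-a(t−s)} ε(s) u(s) ds. Then Θ(t) := u(t) + w(t) satisfies Θ(t) ≤ Θ(0)e^{-ct} + h/c + 2C ∫₀^t e^{-c(t−s)} ε(s) Θ(s) ds, and consequently e^{ct}Θ(t) ≤ (Θ(0) + h/c) exp(2Cη/γ + 2Cβ t) + h∫₀^t e^{cs} exp(2Cη/γ + 2Cβ(t−s)) ds. -/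
/-!
Adding the two inequalities, with `e^{-a(t-s)} ≤ e^{-c(t-s)}` (as `c ≤ a`) and `u ≤ u + w`, gives
the integral inequality for `Θ = u + w`. Multiplied by `e^{ct}` it becomes
`v t ≤ K + ∫₀ᵗ (h e^{cs} + 2Cε(s) v(s)) ds` for `v t = e^{ct} Θ(t)` and `K = Θ(0) + h/c`, since
`(h/c) e^{ct} = h/c + ∫₀ᵗ h e^{cs} ds`. Grönwall's lemma in integral form then bounds `v t` by
`e^{A t - A 0} K + ∫₀ᵗ e^{A t - A s} h e^{cs} ds`, where `A = 2C (βt - η e^{-γt}/γ)` is a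
primitive of `2Cε` with `A t - A s ≤ 2Cη/γ + 2Cβ(t - s)` for `0 ≤ s`.
-/

open Real intervalIntegral Set

section Gronwall

variable {v f k A : ℝ → ℝ} {K : ℝ}

theorem antitoneOn_gronwall_potential (hv : Continuous v) (hf : Continuous f) (hk : Continuous k)
    (hk_nonneg : ∀ s, 0 ≤ s → 0 ≤ k s) (hA : ∀ x, HasDerivAt A (k x) x)
    (hbound : ∀ t, 0 ≤ t → v t ≤ K + ∫ s in (0:ℝ)..t, (f s + k s * v s)) :
    AntitoneOn (fun t => exp (-A t) * (K + ∫ s in (0:ℝ)..t, (f s + k s * v s)) -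
      ∫ s in (0:ℝ)..t, exp (-A s) * f s) (Ici 0) := by
  have hA_cont : Continuous A := continuous_iff_continuousAt.2 fun x => (hA x).continuousAt
  have hG : ∀ x, HasDerivAt (fun t => exp (-A t) * (K + ∫ s in (0:ℝ)..t, (f s + k s * v s)) -
      ∫ s in (0:ℝ)..t, exp (-A s) * f s)
      (exp (-A x) * -k x * (K + ∫ s in (0:ℝ)..x, (f s + k s * v s)) +
        exp (-A x) * (f x + k x * v x) - exp (-A x) * f x) x := fun x =>
    ((hA x).neg.exp.mul
      (((hf.add (hk.mul hv)).integral_hasStrictDerivAt 0 x).hasDerivAt.const_add K)).sub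
      (((hA_cont.neg.rexp).mul hf).integral_hasStrictDerivAt 0 x).hasDerivAt
  refine antitoneOn_of_hasDerivWithinAt_nonpos (convex_Ici 0)
    (fun x _ => (hG x).continuousAt.continuousWithinAt) (fun x _ => (hG x).hasDerivWithinAt)
    fun x hx => ?_
  rw [interior_Ici, mem_Ioi] at hx
  have hkx := hk_nonneg x hx.le
  calc _ = exp (-A x) * k x * (v x - (K + ∫ s in (0:ℝ)..x, (f s + k s * v s))) := by ring
    _ ≤ 0 := mul_nonpos_of_nonneg_of_nonpos (by positivity) (by linarith [hbound x hx.le])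

theorem le_gronwall_integral (hv : Continuous v) (hf : Continuous f) (hk : Continuous k)
    (hk_nonneg : ∀ s, 0 ≤ s → 0 ≤ k s) (hA : ∀ x, HasDerivAt A (k x) x)
    (hbound : ∀ t, 0 ≤ t → v t ≤ K + ∫ s in (0:ℝ)..t, (f s + k s * v s)) {t : ℝ} (ht : 0 ≤ t) :
    v t ≤ exp (A t - A 0) * K + ∫ s in (0:ℝ)..t, exp (A t - A s) * f s := by
  have hG := antitoneOn_gronwall_potential hv hf hk hk_nonneg hA hbound self_mem_Ici ht ht
  simp only [integral_same, add_zero, sub_zero] at hG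
  calc v t ≤ K + ∫ s in (0:ℝ)..t, (f s + k s * v s) := hbound t ht
    _ ≤ exp (A t) * (exp (-A 0) * K + ∫ s in (0:ℝ)..t, exp (-A s) * f s) := by
      rw [← div_le_iff₀' (exp_pos _), div_eq_mul_inv, ← exp_neg, mul_comm]
      linarith
    _ = exp (A t - A 0) * K + ∫ s in (0:ℝ)..t, exp (A t - A s) * f s := by
      simp only [mul_add, ← integral_const_mul, ← mul_assoc, ← exp_add, sub_eq_add_neg]

end Gronwall

section CoupledSystem

variable {c C h : ℝ}

theorem add_le_of_coupled_exp_kernel_ineq {u w ε : ℝ → ℝ} {a : ℝ} (hca : c ≤ a) (hC : 0 ≤ C)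
    (hu : Continuous u) (hw : Continuous w) (hε : Continuous ε)
    (hu_nonneg : ∀ t, 0 ≤ t → 0 ≤ u t) (hw_nonneg : ∀ t, 0 ≤ t → 0 ≤ w t)
    (hε_nonneg : ∀ s, 0 ≤ ε s) {t : ℝ} (ht : 0 ≤ t)
    (hu_ineq : u t ≤ u 0 * exp (-c * t) + h / c +
      C * ∫ s in (0:ℝ)..t, exp (-c * (t - s)) * ε s * (u s + w s))
    (hw_ineq : w t ≤ w 0 * exp (-a * t) +
      C * ∫ s in (0:ℝ)..t, exp (-a * (t - s)) * ε s * u s) :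
    u t + w t ≤ (u 0 + w 0) * exp (-c * t) + h / c +
      2 * C * ∫ s in (0:ℝ)..t, exp (-c * (t - s)) * ε s * (u s + w s) := by
  have hw_kernel : ∫ s in (0:ℝ)..t, exp (-a * (t - s)) * ε s * u s ≤
      ∫ s in (0:ℝ)..t, exp (-c * (t - s)) * ε s * (u s + w s) := by
    refine integral_mono_on ht (Continuous.intervalIntegrable (by fun_prop) _ _)
      (Continuous.intervalIntegrable (by fun_prop) _ _) fun s ⟨hs, hst⟩ => ?_
    have := hu_nonneg s hs
    have := hw_nonneg s hs
    have := hε_nonneg s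
    gcongr ?_ * _ * ?_
    · exact exp_le_exp.2 (by nlinarith)
    · linarith
  have hw0 : w 0 * exp (-a * t) ≤ w 0 * exp (-c * t) :=
    mul_le_mul_of_nonneg_left (exp_le_exp.2 (by nlinarith)) (hw_nonneg 0 le_rfl)
  linarith [mul_le_mul_of_nonneg_left hw_kernel hC]

theorem integral_exp_mul (hc : c ≠ 0) (t : ℝ) :
    ∫ s in (0:ℝ)..t, exp (c * s) = (exp (c * t) - 1) / c := by
  simp [integral_comp_mul_left (fun x => exp x) hc, div_eq_inv_mul]

theorem exp_mul_le_add_integral {Θ ε : ℝ → ℝ} (hc : c ≠ 0) (hΘ : Continuous Θ)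
    (hε : Continuous ε) {t : ℝ}
    (hΘ_ineq : Θ t ≤ Θ 0 * exp (-c * t) + h / c +
      2 * C * ∫ s in (0:ℝ)..t, exp (-c * (t - s)) * ε s * Θ s) :
    exp (c * t) * Θ t ≤ Θ 0 + h / c +
      ∫ s in (0:ℝ)..t, (h * exp (c * s) + 2 * C * ε s * (exp (c * s) * Θ s)) := by
  have hrescale : ∫ s in (0:ℝ)..t, 2 * C * ε s * (exp (c * s) * Θ s) =
      exp (c * t) * (2 * C * ∫ s in (0:ℝ)..t, exp (-c * (t - s)) * ε s * Θ s) := by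
    rw [← integral_const_mul, ← integral_const_mul]
    refine integral_congr fun s _ => ?_
    have : exp (c * s) = exp (c * t) * exp (-c * (t - s)) := by rw [← exp_add]; ring_nf
    simp only [this]
    ring
  rw [integral_add (Continuous.intervalIntegrable (by fun_prop) _ _)
    (Continuous.intervalIntegrable (by fun_prop) _ _), integral_const_mul, integral_exp_mul hc,
    hrescale]
  have hexp : exp (c * t) * exp (-c * t) = 1 := by rw [← exp_add]; simp
  have := mul_le_mul_of_nonneg_left hΘ_ineq (exp_pos (c * t)).le
  linear_combination this + Θ 0 * hexp

end CoupledSystem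

section ExpDecay

variable {η β γ : ℝ}

theorem hasDerivAt_exp_decay_primitive (hγ : γ ≠ 0) (x : ℝ) :
    HasDerivAt (fun t => β * t - η * exp (-γ * t) / γ) (η * exp (-γ * x) + β) x := by
  refine (((hasDerivAt_id' x).const_mul β).sub
    ((((hasDerivAt_id' x).const_mul (-γ)).exp.const_mul η).div_const γ)).congr_deriv ?_
  field_simp
  ring

theorem exp_decay_primitive_sub_le (hη : 0 ≤ η) (hγ : 0 < γ) {s t : ℝ} (hs : 0 ≤ s) :
    (β * t - η * exp (-γ * t) / γ) - (β * s - η * exp (-γ * s) / γ) ≤ η / γ + β * (t - s) := by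
  have hs_exp : exp (-γ * s) ≤ 1 := exp_le_one_iff.2 (by nlinarith)
  have ht_exp := (exp_pos (-γ * t)).le
  have : η * exp (-γ * s) / γ - η * exp (-γ * t) / γ ≤ η / γ := by
    rw [← sub_div]
    gcongr
    nlinarith
  linarith

theorem le_gronwall_exp_decay {v f : ℝ → ℝ} {K C : ℝ} (hv : Continuous v) (hf : Continuous f)
    (hf_nonneg : ∀ s, 0 ≤ s → 0 ≤ f s) (hK : 0 ≤ K) (hC : 0 ≤ C) (hη : 0 ≤ η) (hβ : 0 ≤ β)
    (hγ : 0 < γ)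
    (hbound : ∀ t, 0 ≤ t →
      v t ≤ K + ∫ s in (0:ℝ)..t, (f s + 2 * C * (η * exp (-γ * s) + β) * v s))
    {t : ℝ} (ht : 0 ≤ t) :
    v t ≤ K * exp (2 * C * η / γ + 2 * C * β * t) +
      ∫ s in (0:ℝ)..t, f s * exp (2 * C * η / γ + 2 * C * β * (t - s)) := by
  set A : ℝ → ℝ := fun t => 2 * C * (β * t - η * exp (-γ * t) / γ)
  have hA : ∀ x, HasDerivAt A (2 * C * (η * exp (-γ * x) + β)) x := fun x =>
    (hasDerivAt_exp_decay_primitive hγ.ne' x).const_mul (2 * C)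
  have hA_le : ∀ s, 0 ≤ s → A t - A s ≤ 2 * C * η / γ + 2 * C * β * (t - s) := fun s hs => by
    simp only [A]
    linear_combination mul_le_mul_of_nonneg_left
      (exp_decay_primitive_sub_le (β := β) (t := t) hη hγ hs) (by positivity : 0 ≤ 2 * C)
  calc v t ≤ exp (A t - A 0) * K + ∫ s in (0:ℝ)..t, exp (A t - A s) * f s :=
      le_gronwall_integral hv hf (by fun_prop) (fun s _ => by positivity) hA hbound ht
    _ ≤ _ := by
      rw [mul_comm]
      gcongr ?_ + ?_
      · exact mul_le_mul_of_nonneg_left (exp_le_exp.2 (by simpa using hA_le 0 le_rfl)) hK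
      · refine integral_mono_on ht (Continuous.intervalIntegrable (by fun_prop) _ _)
          (Continuous.intervalIntegrable (by fun_prop) _ _) fun s ⟨hs, _⟩ => ?_
        rw [mul_comm]
        exact mul_le_mul_of_nonneg_left (exp_le_exp.2 (hA_le s hs)) (hf_nonneg s hs)

end ExpDecay

theorem stmt_19 (u w : ℝ → ℝ) (c a C h η β γ : ℝ)
    (hc : 0 < c) (ha : c < a) (hC : 0 ≤ C) (hh : 0 ≤ h) (hη : 0 ≤ η) (hβ : 0 ≤ β)
    (hγ : 0 < γ)
    (hu_cont : Continuous u) (hw_cont : Continuous w)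
    (hu_nonneg : ∀ t, 0 ≤ t → 0 ≤ u t) (hw_nonneg : ∀ t, 0 ≤ t → 0 ≤ w t)
    (hu_ineq : ∀ t, 0 ≤ t → u t ≤ u 0 * Real.exp (-c * t) + h / c +
      C * ∫ s in (0:ℝ)..t,
        Real.exp (-c * (t - s)) * (η * Real.exp (-γ * s) + β) * (u s + w s))
    (hw_ineq : ∀ t, 0 ≤ t → w t ≤ w 0 * Real.exp (-a * t) +
      C * ∫ s in (0:ℝ)..t, Real.exp (-a * (t - s)) * (η * Real.exp (-γ * s) + β) * u s) :
    (∀ t, 0 ≤ t → u t + w t ≤ (u 0 + w 0) * Real.exp (-c * t) + h / c +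
      2 * C * ∫ s in (0:ℝ)..t,
        Real.exp (-c * (t - s)) * (η * Real.exp (-γ * s) + β) * (u s + w s)) ∧
    (∀ t, 0 ≤ t → Real.exp (c * t) * (u t + w t) ≤
      (u 0 + w 0 + h / c) * Real.exp (2 * C * η / γ + 2 * C * β * t) +
      h * ∫ s in (0:ℝ)..t,
        Real.exp (c * s) * Real.exp (2 * C * η / γ + 2 * C * β * (t - s))) := by
  set ε : ℝ → ℝ := fun s => η * exp (-γ * s) + β
  have hΘ : ∀ t, 0 ≤ t → u t + w t ≤ (u 0 + w 0) * exp (-c * t) + h / c +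
      2 * C * ∫ s in (0:ℝ)..t, exp (-c * (t - s)) * ε s * (u s + w s) := fun t ht =>
    add_le_of_coupled_exp_kernel_ineq ha.le hC hu_cont hw_cont (by fun_prop)
      hu_nonneg hw_nonneg (fun s => by positivity) ht (hu_ineq t ht) (hw_ineq t ht)
  refine ⟨hΘ, fun t ht => ?_⟩
  have hK : 0 ≤ u 0 + w 0 + h / c := by
    have := hu_nonneg 0 le_rfl
    have := hw_nonneg 0 le_rfl
    positivity
  simpa only [mul_assoc, integral_const_mul] using
    le_gronwall_exp_decay (by fun_prop) (by fun_prop) (fun s _ => by positivity) hK hC hη hβ hγ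
      (fun t ht => exp_mul_le_add_integral (Θ := fun s => u s + w s) hc.ne' (by fun_prop)
        (by fun_prop) (hΘ t ht)) ht
end
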